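/- arXiv:math/0412458 — 6 statements merged into one kernel-verified Lean document; each statement's English description precedes it below -/
import Mathlib

section
/- Fix a positive integer M. Let A₁ = [[a₁, -b₁], [c₁, -d₁]] and A₂ = [[a₂, -b₂], [c₂, -d₂]] be integer matrices of determinant 1 whose entries satisfy 0 < dᵢ < M·bᵢ < aᵢ for i = 1, 2. Then the product A₁A₂ equals [[a₁a₂ - b₁c₂, -(a₁b₂ - b₁d₂)], [c₁a₂ - d₁c₂, -(c₁b₂ - d₁d₂)]], and its entries satisfy 0 < c₁b₂ - d₁d₂ < M·(a₁b₂ - b₁d₂) < a₁a₂ - b₁c₂. -/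
/-- If `A₁ = [[a₁, -b₁], [c₁, -d₁]]` and `A₂ = [[a₂, -b₂], [c₂, -d₂]]` are integer
matrices of determinant `1` with `0 < dᵢ < M·bᵢ < aᵢ`, then the product `A₁ * A₂`
equals `[[a₁a₂ - b₁c₂, -(a₁b₂ - b₁d₂)], [c₁a₂ - d₁c₂, -(c₁b₂ - d₁d₂)]]` and its
entries satisfy `0 < c₁b₂ - d₁d₂ < M·(a₁b₂ - b₁d₂) < a₁a₂ - b₁c₂`. -/
theorem sl2z_product_form (M a₁ b₁ c₁ d₁ a₂ b₂ c₂ d₂ : ℤ) (hM : 0 < M)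
    (hdet1 : (!![a₁, -b₁; c₁, -d₁] : Matrix (Fin 2) (Fin 2) ℤ).det = 1)
    (hdet2 : (!![a₂, -b₂; c₂, -d₂] : Matrix (Fin 2) (Fin 2) ℤ).det = 1)
    (hd₁ : 0 < d₁) (hb₁ : d₁ < M * b₁) (ha₁ : M * b₁ < a₁)
    (hd₂ : 0 < d₂) (hb₂ : d₂ < M * b₂) (ha₂ : M * b₂ < a₂) :
    (!![a₁, -b₁; c₁, -d₁] : Matrix (Fin 2) (Fin 2) ℤ) * !![a₂, -b₂; c₂, -d₂] =
      !![a₁ * a₂ - b₁ * c₂, -(a₁ * b₂ - b₁ * d₂);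
         c₁ * a₂ - d₁ * c₂, -(c₁ * b₂ - d₁ * d₂)] ∧
    0 < c₁ * b₂ - d₁ * d₂ ∧ c₁ * b₂ - d₁ * d₂ < M * (a₁ * b₂ - b₁ * d₂) ∧
      M * (a₁ * b₂ - b₁ * d₂) < a₁ * a₂ - b₁ * c₂ := by
  have e1 : b₁ * c₁ = 1 + a₁ * d₁ := by
    simp [Matrix.det_fin_two_of] at hdet1; linarith
  have e2 : b₂ * c₂ = 1 + a₂ * d₂ := by
    simp [Matrix.det_fin_two_of] at hdet2; linarith
  have hb1 : 0 < b₁ := by nlinarith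
  have hb2 : 0 < b₂ := by nlinarith
  have hX : b₁ < a₁ * b₂ - b₁ * d₂ := by nlinarith [mul_le_mul_of_nonneg_right (Int.add_one_le_iff.mpr ha₁) hb2.le, mul_le_mul_of_nonneg_left (Int.add_one_le_iff.mpr hb₂) hb1.le]
  refine ⟨?_, ?_, ?_, ?_⟩
  · ext i j
    fin_cases i <;> fin_cases j <;>
      simp [Matrix.mul_apply, Fin.sum_univ_succ] <;> ring
  · have h : b₁ * 0 < b₁ * (c₁ * b₂ - d₁ * d₂) := by nlinarith
    simpa using lt_of_mul_lt_mul_left h hb1.le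
  · have h : b₁ * (c₁ * b₂ - d₁ * d₂) < b₁ * (M * (a₁ * b₂ - b₁ * d₂)) := by
      nlinarith [mul_le_mul_of_nonneg_right (Int.add_one_le_iff.mpr hb₁) (by linarith : (0:ℤ) ≤ a₁ * b₂ - b₁ * d₂)]
    exact lt_of_mul_lt_mul_left h hb1.le
  · have h : b₂ * (M * (a₁ * b₂ - b₁ * d₂)) < b₂ * (a₁ * a₂ - b₁ * c₂) := by
      nlinarith [mul_le_mul_of_nonneg_right (Int.add_one_le_iff.mpr ha₂) (by linarith : (0:ℤ) ≤ a₁ * b₂ - b₁ * d₂)]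
    exact lt_of_mul_lt_mul_left h hb2.le
end

section
/- Let G be an abelian group, χ a bicharacter on ℤⁿ with values in G, E = {e₁, …, eₙ} a basis of ℤⁿ, and i ∈ {1, …, n}. Assume that for all j ≠ i the number m_{ij} := min{m ∈ ℕ₀ | χ(e_i,e_i)^m χ(e_i,e_j)χ(e_j,e_i) = 1, or χ(e_i,e_i)^{m+1} = 1 and χ(e_i,e_i) ≠ 1} exists, and let s_{i,E} be the linear automorphism of ℤⁿ with s_{i,E}(e_i) = -e_i and s_{i,E}(e_j) = e_j + m_{ij} e_i for j ≠ i. Let E' = s_{i,E}(E), i.e., e'_i = -e_i and e'_j = e_j + m_{ij} e_i for j ≠ i. Then for every j ≠ i the number m'_{ij} := min{m ∈ ℕ₀ | χ(e'_i,e'_i)^m χ(e'_i,e'_j)χ(e'_j,e'_i) = 1, or χ(e'_i,e'_i)^{m+1} = 1 and χ(e'_i,e'_i) ≠ 1} exists and equals m_{ij}; consequently s_{i,E'} = s_{i,E}. -/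
/-!
With `a = χ(e_i,e_i)` and `c = χ(e_i,e_j)χ(e_j,e_i)`, passing from `E` to `E'` keeps `a` and
replaces `c` by `(c a^{2M})⁻¹`, where `M = m_{ij}`. If `a^M c = 1` this replacement fixes
`c`. Otherwise `a^{M+1} = 1 ≠ a`, and `m ↦ M - 1 - m` exchanges the solutions `m < M` of
`a^m c = 1` with those of `a^m (c a^{2M})⁻¹ = 1`, so in both cases the least solution is
still `M`.
-/

/-- The defining condition for the integer `m_{ij}`: either
`χ(x,x)^m χ(x,y) χ(y,x) = 1`, or `χ(x,x)^{m+1} = 1` and `χ(x,x) ≠ 1`. -/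
def ReflCond {n : ℕ} {G : Type*} [CommGroup G]
    (χ : (Fin n → ℤ) → (Fin n → ℤ) → G) (x y : Fin n → ℤ) (m : ℕ) : Prop :=
  χ x x ^ m * (χ x y * χ y x) = 1 ∨ (χ x x ^ (m + 1) = 1 ∧ χ x x ≠ 1)

section CartanCond

variable {G : Type*} [CommGroup G]

/-- `ReflCond χ x y` is `CartanCond (χ x x) (χ x y * χ y x)`. -/
def CartanCond (a c : G) (m : ℕ) : Prop :=
  a ^ m * c = 1 ∨ (a ^ (m + 1) = 1 ∧ a ≠ 1)

theorem CartanCond.isLeast_reflect {a c : G} {M : ℕ} (h : IsLeast {m | CartanCond a c m} M) :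
    IsLeast {m | CartanCond a (c * a ^ (2 * M))⁻¹ m} M := by
  obtain ⟨hM | ⟨hord, ha⟩, hmin⟩ := h
  · have hfix : (c * a ^ (2 * M))⁻¹ = c := by
      rw [eq_inv_of_mul_eq_one_right hM, two_mul, pow_add, inv_mul_cancel_left]
    rw [hfix]
    exact ⟨Or.inl hM, hmin⟩
  refine ⟨Or.inr ⟨hord, ha⟩, fun k hk => ?_⟩
  rcases hk with hk | hk
  · by_contra! hkM
    have hpow : a ^ k = c * a ^ (2 * M) := mul_inv_eq_one.mp hk
    have h2M : a ^ (2 * M) = a ^ (M - 1) := by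
      rw [show 2 * M = (M - 1) + (M + 1) by omega, pow_add, hord, mul_one]
    have hrefl : a ^ (M - 1 - k) * c = 1 := mul_eq_right.mp <|
      calc a ^ (M - 1 - k) * c * a ^ (M - 1)
          = a ^ (M - 1 - k) * a ^ k := by rw [mul_assoc, ← h2M, hpow]
        _ = a ^ (M - 1) := by rw [← pow_add, Nat.sub_add_cancel (by omega)]
    have := hmin (Or.inl hrefl : CartanCond a c (M - 1 - k))
    omega
  · exact hmin (Or.inr hk)

end CartanCond

def AddChar.ofMapAdd {A G : Type*} [AddGroup A] [Group G] (f : A → G)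
    (hf : ∀ x y, f (x + y) = f x * f y) : AddChar A G where
  toFun := f
  map_zero_eq_one' := mul_eq_left.mp (by rw [← hf 0 0, add_zero])
  map_add_eq_mul' := hf

section Bicharacter

variable {A G : Type*} [AddCommGroup A] [CommGroup G] {χ : A → A → G}

theorem bichar_neg_add_zsmul (hχl : ∀ x y z, χ (x + y) z = χ x z * χ y z)
    (hχr : ∀ x y z, χ x (y + z) = χ x y * χ x z) (x y : A) (k : ℤ) :
    χ (-x) (-x) = χ x x ∧
      χ (-x) (y + k • x) * χ (y + k • x) (-x) =
        (χ x y * χ y x * χ x x ^ (2 * k))⁻¹ := by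
  let left (z : A) : AddChar A G := AddChar.ofMapAdd (χ · z) (hχl · · z)
  let right (z : A) : AddChar A G := AddChar.ofMapAdd (χ z ·) (hχr z)
  have neg_left (u v : A) : χ (-u) v = (χ u v)⁻¹ := (left v).map_neg_eq_inv u
  have neg_right (u v : A) : χ u (-v) = (χ u v)⁻¹ := (right u).map_neg_eq_inv v
  have zsmul_left (u v : A) : χ (k • u) v = χ u v ^ k := (left v).map_zsmul_eq_zpow k u
  have zsmul_right (u v : A) : χ u (k • v) = χ u v ^ k := (right u).map_zsmul_eq_zpow k v
  refine ⟨by rw [neg_left, neg_right, inv_inv], ?_⟩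
  rw [hχr, hχl, neg_left, neg_left, neg_right, neg_right, zsmul_left, zsmul_right,
    two_mul, zpow_add]
  simp only [mul_inv]
  ac_rfl

end Bicharacter

theorem reflCond_neg_add_smul_iff {n : ℕ} {G : Type*} [CommGroup G]
    {χ : (Fin n → ℤ) → (Fin n → ℤ) → G}
    (hχl : ∀ x y z, χ (x + y) z = χ x z * χ y z)
    (hχr : ∀ x y z, χ x (y + z) = χ x y * χ x z) (x y : Fin n → ℤ) (M m : ℕ) :
    ReflCond χ (-x) (y + (M : ℤ) • x) m ↔
      CartanCond (χ x x) (χ x y * χ y x * χ x x ^ (2 * M))⁻¹ m := by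
  obtain ⟨hdiag, hoff⟩ := bichar_neg_add_zsmul hχl hχr x y M
  rw [show 2 * (M : ℤ) = (2 * M : ℕ) by push_cast; rfl, zpow_natCast] at hoff
  rw [ReflCond, CartanCond, hdiag, hoff]

theorem reflection_invariance_general {n : ℕ} {G : Type*} [CommGroup G]
    (χ : (Fin n → ℤ) → (Fin n → ℤ) → G)
    (hχl : ∀ x y z, χ (x + y) z = χ x z * χ y z)
    (hχr : ∀ x y z, χ x (y + z) = χ x y * χ x z)
    (b : Module.Basis (Fin n) ℤ (Fin n → ℤ)) (i : Fin n)
    (hex : ∀ j, j ≠ i → {m : ℕ | ReflCond χ (b i) (b j) m}.Nonempty)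
    (mij : Fin n → ℕ)
    (hmij : ∀ j, j ≠ i → mij j = sInf {m : ℕ | ReflCond χ (b i) (b j) m})
    (e' : Fin n → (Fin n → ℤ))
    (he'i : e' i = -b i)
    (he'j : ∀ j, j ≠ i → e' j = b j + (mij j : ℤ) • b i) :
    (∀ j, j ≠ i → {m : ℕ | ReflCond χ (e' i) (e' j) m}.Nonempty ∧
      sInf {m : ℕ | ReflCond χ (e' i) (e' j) m} = mij j) ∧
    (∀ s : (Fin n → ℤ) →ₗ[ℤ] (Fin n → ℤ),
      s (b i) = -b i → (∀ j, j ≠ i → s (b j) = b j + (mij j : ℤ) • b i) →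
      s (e' i) = -e' i ∧ ∀ j, j ≠ i → s (e' j) = e' j + (mij j : ℤ) • e' i) := by
  refine ⟨fun j hj => ?_, fun s hsi hsj => ⟨?_, fun j hj => ?_⟩⟩
  · have hM : IsLeast {m | CartanCond (χ (b i) (b i)) (χ (b i) (b j) * χ (b j) (b i)) m}
        (mij j) := hmij j hj ▸ isLeast_csInf (hex j hj)
    have hM' := CartanCond.isLeast_reflect hM
    simp only [he'i, he'j j hj, reflCond_neg_add_smul_iff hχl hχr]
    exact ⟨hM'.nonempty, hM'.csInf_eq⟩
  · rw [he'i, map_neg, hsi, neg_neg]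
  · rw [he'j j hj, map_add, map_smul, hsi, hsj j hj, he'i]

/-- Let `χ` be a bicharacter on `ℤⁿ` with values in an abelian group `G`, `E` a basis
of `ℤⁿ` and `i` an index such that all `m_{ij}` (for `j ≠ i`) exist.  Let
`E' = s_{i,E}(E)`, i.e. `e'_i = -e_i` and `e'_j = e_j + m_{ij} e_i` for `j ≠ i`.
Then for every `j ≠ i` the number `m'_{ij}` defined with respect to `E'` exists and
equals `m_{ij}`; consequently `s_{i,E'} = s_{i,E}`. -/
theorem reflection_invariance {n : ℕ} {G : Type*} [CommGroup G]
    (χ : (Fin n → ℤ) → (Fin n → ℤ) → G)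
    (hχ0l : ∀ e, χ 0 e = 1) (hχ0r : ∀ e, χ e 0 = 1)
    (hχl : ∀ x y z, χ (x + y) z = χ x z * χ y z)
    (hχr : ∀ x y z, χ x (y + z) = χ x y * χ x z)
    (b : Module.Basis (Fin n) ℤ (Fin n → ℤ)) (i : Fin n)
    (hex : ∀ j, j ≠ i → {m : ℕ | ReflCond χ (b i) (b j) m}.Nonempty)
    (mij : Fin n → ℕ)
    (hmij : ∀ j, j ≠ i → mij j = sInf {m : ℕ | ReflCond χ (b i) (b j) m})
    (e' : Fin n → (Fin n → ℤ))
    (he'i : e' i = -b i)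
    (he'j : ∀ j, j ≠ i → e' j = b j + (mij j : ℤ) • b i) :
    (∀ j, j ≠ i → {m : ℕ | ReflCond χ (e' i) (e' j) m}.Nonempty ∧
      sInf {m : ℕ | ReflCond χ (e' i) (e' j) m} = mij j) ∧
    (∀ s : (Fin n → ℤ) →ₗ[ℤ] (Fin n → ℤ),
      s (b i) = -b i → (∀ j, j ≠ i → s (b j) = b j + (mij j : ℤ) • b i) →
      s (e' i) = -e' i ∧ ∀ j, j ≠ i → s (e' j) = e' j + (mij j : ℤ) • e' i) :=
  reflection_invariance_general χ hχl hχr b i hex mij hmij e' he'i he'j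
end

section
/- Let G be an abelian group and let χ, χ' be bicharacters on ℤⁿ with values in G such that χ'(x,y) = χ(x,y)·η(x,y) for all x, y ∈ ℤⁿ, where η is a bicharacter on ℤⁿ with values in G satisfying η(x,y)η(y,x) = 1 and η(x,x) = 1 for all x, y ∈ ℤⁿ. Let E = {e₁, …, eₙ} be a basis of ℤⁿ and i ∈ {1, …, n}, and suppose that for every j ≠ i the number m_{ij} := min{m ∈ ℕ₀ | χ(e_i,e_i)^m χ(e_i,e_j)χ(e_j,e_i) = 1, or χ(e_i,e_i)^{m+1} = 1 and χ(e_i,e_i) ≠ 1} exists. Then for every j ≠ i the corresponding number m'_{ij} defined with χ' in place of χ exists and equals m_{ij}; hence the map s_{i,E} (given by s_{i,E}(e_i) = -e_i and s_{i,E}(e_j) = e_j + m_{ij} e_i for j ≠ i) does not depend on the antisymmetric part of the bicharacter. -/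
section ReflCond

variable {n : ℕ} {G : Type*} [CommGroup G] {χ χ' η : (Fin n → ℤ) → (Fin n → ℤ) → G}
  {x y : Fin n → ℤ}

theorem reflCond_congr (hdiag : χ' x x = χ x x) (hsymm : χ' x y * χ' y x = χ x y * χ y x) :
    ReflCond χ' x y = ReflCond χ x y := by
  funext m
  simp only [ReflCond, hdiag, hsymm]

theorem reflCond_mul_antisymm (hanti : η x y * η y x = 1) (hdiag : η x x = 1)
    (hχ' : ∀ u v, χ' u v = χ u v * η u v) : ReflCond χ' x y = ReflCond χ x y :=
  reflCond_congr (by rw [hχ', hdiag, mul_one])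
    (by rw [hχ', hχ', mul_mul_mul_comm, hanti, mul_one])

end ReflCond

theorem reflection_indep_antisymmetric_part_general {n : ℕ} {G : Type*} [CommGroup G]
    (χ χ' η : (Fin n → ℤ) → (Fin n → ℤ) → G)
    (hηanti : ∀ x y, η x y * η y x = 1) (hηdiag : ∀ x, η x x = 1)
    (hχ' : ∀ x y, χ' x y = χ x y * η x y)
    (b : Module.Basis (Fin n) ℤ (Fin n → ℤ)) (i : Fin n)
    (hex : ∀ j, j ≠ i → {m : ℕ | ReflCond χ (b i) (b j) m}.Nonempty) :
    (∀ j, j ≠ i → {m : ℕ | ReflCond χ' (b i) (b j) m}.Nonempty ∧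
      sInf {m : ℕ | ReflCond χ' (b i) (b j) m} =
        sInf {m : ℕ | ReflCond χ (b i) (b j) m}) ∧
    (∀ s s' : (Fin n → ℤ) →ₗ[ℤ] (Fin n → ℤ),
      s (b i) = -b i →
      (∀ j, j ≠ i → s (b j) = b j +
        ((sInf {m : ℕ | ReflCond χ (b i) (b j) m} : ℕ) : ℤ) • b i) →
      s' (b i) = -b i →
      (∀ j, j ≠ i → s' (b j) = b j +
        ((sInf {m : ℕ | ReflCond χ' (b i) (b j) m} : ℕ) : ℤ) • b i) →
      s = s') := by
  have hcond : ∀ j, ReflCond χ' (b i) (b j) = ReflCond χ (b i) (b j) := fun j =>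
    reflCond_mul_antisymm (hηanti _ _) (hηdiag _) hχ'
  refine ⟨fun j hj => by rw [hcond]; exact ⟨hex j hj, rfl⟩, ?_⟩
  intro s s' hsi hsj hsi' hsj'
  refine b.ext fun j => ?_
  rcases eq_or_ne j i with rfl | hj
  · rw [hsi, hsi']
  · rw [hsj j hj, hsj' j hj, hcond]

/-- If two bicharacters `χ` and `χ' = χ·η` on `ℤⁿ` differ by an antisymmetric
bicharacter `η` (i.e. `η(x,y)η(y,x) = 1` and `η(x,x) = 1`), then the numbers
`m_{ij}` defined with respect to `χ'` exist and coincide with those defined with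
respect to `χ`; hence the map `s_{i,E}` does not depend on the antisymmetric part
of the bicharacter. -/
theorem reflection_indep_antisymmetric_part {n : ℕ} {G : Type*} [CommGroup G]
    (χ χ' η : (Fin n → ℤ) → (Fin n → ℤ) → G)
    (hχ0l : ∀ e, χ 0 e = 1) (hχ0r : ∀ e, χ e 0 = 1)
    (hχl : ∀ x y z, χ (x + y) z = χ x z * χ y z)
    (hχr : ∀ x y z, χ x (y + z) = χ x y * χ x z)
    (hη0l : ∀ e, η 0 e = 1) (hη0r : ∀ e, η e 0 = 1)
    (hηl : ∀ x y z, η (x + y) z = η x z * η y z)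
    (hηr : ∀ x y z, η x (y + z) = η x y * η x z)
    (hηanti : ∀ x y, η x y * η y x = 1) (hηdiag : ∀ x, η x x = 1)
    (hχ' : ∀ x y, χ' x y = χ x y * η x y)
    (b : Module.Basis (Fin n) ℤ (Fin n → ℤ)) (i : Fin n)
    (hex : ∀ j, j ≠ i → {m : ℕ | ReflCond χ (b i) (b j) m}.Nonempty) :
    (∀ j, j ≠ i → {m : ℕ | ReflCond χ' (b i) (b j) m}.Nonempty ∧
      sInf {m : ℕ | ReflCond χ' (b i) (b j) m} =
        sInf {m : ℕ | ReflCond χ (b i) (b j) m}) ∧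
    (∀ s s' : (Fin n → ℤ) →ₗ[ℤ] (Fin n → ℤ),
      s (b i) = -b i →
      (∀ j, j ≠ i → s (b j) = b j +
        ((sInf {m : ℕ | ReflCond χ (b i) (b j) m} : ℕ) : ℤ) • b i) →
      s' (b i) = -b i →
      (∀ j, j ≠ i → s' (b j) = b j +
        ((sInf {m : ℕ | ReflCond χ' (b i) (b j) m} : ℕ) : ℤ) • b i) →
      s = s') :=
  reflection_indep_antisymmetric_part_general χ χ' η hηanti hηdiag hχ' b i hex
end

section
/- For every n ≥ 1 and all integers m₀, m₁, …, m_{2n-1} with m_i ≥ 2 for every i, the product of matrices ∏_{i=0}^{2n-1} [[m_i, -1], [1, 0]] (taken in order of increasing i) is not equal to the identity matrix in SL₂(ℤ). -/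
def MatInv (A : Matrix (Fin 2) (Fin 2) ℤ) : Prop :=
  1 ≤ A 1 0 ∧ A 1 0 + 1 ≤ A 0 0 ∧ A 1 1 ≤ 0 ∧ 0 ≤ A 1 0 + A 1 1 ∧
    A 1 1 - A 0 1 ≤ A 0 0 - A 1 0

lemma matInv_step (A : Matrix (Fin 2) (Fin 2) ℤ) (hA : MatInv A) (k : ℤ) (hk : 2 ≤ k) :
    MatInv (A * !![k, -1; 1, 0]) := by
  obtain ⟨h1, h2, h3, h4, h5⟩ := hA
  rw [Matrix.eta_fin_two A, Matrix.mul_fin_two]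
  unfold MatInv
  norm_num
  refine ⟨?_, ?_, ?_, ?_, ?_⟩ <;>
    nlinarith [mul_le_mul_of_nonneg_left hk (by linarith : (0:ℤ) ≤ A 1 0),
      mul_le_mul_of_nonneg_right hk (by linarith : (0:ℤ) ≤ A 0 0 - A 1 0),
      mul_le_mul_of_nonneg_left hk (by linarith : (0:ℤ) ≤ A 0 0)]

lemma matInv_prod (m : ℕ → ℤ) (k : ℕ) (hm : ∀ i < k + 1, 2 ≤ m i) :
    MatInv (((List.range (k + 1)).map
      (fun i => (!![m i, -1; 1, 0] : Matrix (Fin 2) (Fin 2) ℤ))).prod) := by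
  induction k with
  | zero =>
    have h0 := hm 0 (by norm_num)
    have : ((List.range (0 + 1)).map
        (fun i => (!![m i, -1; 1, 0] : Matrix (Fin 2) (Fin 2) ℤ))).prod = !![m 0, -1; 1, 0] := by
      rw [show List.range (0 + 1) = [0] from rfl]
      simp
    rw [this]
    unfold MatInv
    norm_num
    exact ⟨by linarith, by linarith⟩
  | succ k ih =>
    rw [List.range_succ, List.map_append, List.prod_append]
    simp only [List.map_cons, List.map_nil, List.prod_cons, List.prod_nil, mul_one]
    exact matInv_step _ (ih fun i hi => hm i (by omega)) _ (hm (k + 1) (by omega))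

/-- For every `n ≥ 1` and all integers `m₀, …, m_{2n-1}` with `m_i ≥ 2`, the product
`∏_{i=0}^{2n-1} [[m_i, -1], [1, 0]]` (in order of increasing `i`) is not the identity
matrix. -/
theorem prod_reflection_matrices_ne_one (n : ℕ) (hn : 1 ≤ n) (m : ℕ → ℤ)
    (hm : ∀ i < 2 * n, 2 ≤ m i) :
    ((List.range (2 * n)).map (fun i => (!![m i, -1; 1, 0] : Matrix (Fin 2) (Fin 2) ℤ))).prod
      ≠ 1 := by
  obtain ⟨k, hk⟩ : ∃ k, 2 * n = k + 1 := ⟨2 * n - 1, by omega⟩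
  rw [hk]
  have h := matInv_prod m k (fun i hi => hm i (by omega))
  intro hcontra
  rw [hcontra] at h
  have h10 : (1 : Matrix (Fin 2) (Fin 2) ℤ) 1 0 = 0 := by simp [Matrix.one_apply]
  have := h.1
  omega
end

section
/- For every n ≥ 1 and all integers m₁, …, m_n with m_i ≥ 4 for every i, the product of matrices ∏_{i=1}^{n} [[m_i - 1, -1], [m_i, -1]] (taken in order of increasing i) is not equal to the identity matrix in SL₂(ℤ). -/
/-- Invariant preserved by right multiplication with `!![m-1,-1;m,-1]` for `m ≥ 4`. -/
def MyInv (P : Matrix (Fin 2) (Fin 2) ℤ) : Prop :=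
  1 ≤ P 0 0 + P 0 1 ∧ P 0 0 ≤ 2 * (P 0 0 + P 0 1) ∧
  1 ≤ P 1 0 - P 0 0 ∧ 1 ≤ (P 1 0 + P 1 1) - (P 0 0 + P 0 1) ∧
  P 1 0 - P 0 0 ≤ 2 * ((P 1 0 + P 1 1) - (P 0 0 + P 0 1))

lemma myInv_step {P : Matrix (Fin 2) (Fin 2) ℤ} (h : MyInv P) {k : ℤ} (hk : 4 ≤ k) :
    MyInv (P * !![k - 1, -1; k, -1]) := by
  obtain ⟨h1, h2, h3, h4, h5⟩ := h
  rw [Matrix.eta_fin_two P, Matrix.mul_fin_two]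
  set a := P 0 0; set b := P 0 1; set c := P 1 0; set d := P 1 1
  simp only [MyInv, Matrix.of_apply, Matrix.cons_val', Matrix.cons_val_zero, Matrix.cons_val_one,
    Matrix.head_cons, Matrix.empty_val', Matrix.cons_val_fin_one, Matrix.head_fin_const]
  refine ⟨?_, ?_, ?_, ?_, ?_⟩ <;> nlinarith [mul_le_mul_of_nonneg_left h1 (by linarith : (0:ℤ) ≤ k - 4),
    mul_le_mul_of_nonneg_left h4 (by linarith : (0:ℤ) ≤ k - 4)]

lemma myInv_prod (n : ℕ) (hn : 1 ≤ n) (m : ℕ → ℤ)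
    (hm : ∀ i, 1 ≤ i → i ≤ n → 4 ≤ m i) :
    MyInv (((List.range n).map (fun i =>
      (!![m (i + 1) - 1, -1; m (i + 1), -1] : Matrix (Fin 2) (Fin 2) ℤ))).prod) := by
  induction n with
  | zero => omega
  | succ n ih =>
    rw [List.range_succ, List.map_append, List.prod_append]
    rcases Nat.eq_or_lt_of_le hn with h | h
    · have hn0 : n = 0 := by omega
      subst hn0
      simp only [List.range_zero, List.map_nil, List.prod_nil, one_mul, List.map_cons,
        List.prod_cons, List.prod_nil, List.map_nil, mul_one]
      have h4 : (4:ℤ) ≤ m 1 := hm 1 le_rfl le_rfl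
      refine ⟨?_, ?_, ?_, ?_, ?_⟩ <;>
        simp [Matrix.cons_val_zero, Matrix.cons_val_one] <;> linarith
    · have hn' : 1 ≤ n := by omega
      have ih' := ih hn' (fun i hi1 hi2 => hm i hi1 (by omega))
      simp only [List.map_cons, List.prod_cons, List.map_nil, List.prod_nil, mul_one]
      exact myInv_step ih' (hm (n + 1) (by omega) le_rfl)

/-- For every `n ≥ 1` and all integers `m₁, …, mₙ` with `m_i ≥ 4`, the product
`∏_{i=1}^{n} [[m_i - 1, -1], [m_i, -1]]` (in order of increasing `i`) is not the
identity matrix. -/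
theorem prod_matrices_M2_ne_one (n : ℕ) (hn : 1 ≤ n) (m : ℕ → ℤ)
    (hm : ∀ i, 1 ≤ i → i ≤ n → 4 ≤ m i) :
    (((List.range n).map (fun i =>
      (!![m (i + 1) - 1, -1; m (i + 1), -1] : Matrix (Fin 2) (Fin 2) ℤ))).prod) ≠ 1 := by
  intro hP
  have h := myInv_prod n hn m hm
  rw [hP] at h
  obtain ⟨-, -, h3, -, -⟩ := h
  simp [Matrix.one_apply] at h3
end

section
/- For all integers m₀, m₁ ≥ 2, the matrix product [[m₀,-1],[1,0]] · [[m₁,-1],[1,0]] · [[m₀,-1],[1,0]] · [[1,-1],[1,0]] equals [[m₀²m₁ - m₀m₁ - 2m₀ + 1, m₀(2 - m₀m₁)], [m₀m₁ - m₁ - 1, 1 - m₀m₁]], and this matrix (which lies in SL₂(ℤ)) does not have finite multiplicative order. -/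
private def pseq (t : ℤ) : ℕ → ℤ
  | 0 => 0
  | 1 => 1
  | (n+2) => t * pseq t (n+1) - pseq t n

private lemma pseq_ge (t : ℤ) (ht : 2 ≤ |t|) :
    ∀ n : ℕ, (n : ℤ) ≤ |pseq t n| ∧ |pseq t n| + 1 ≤ |pseq t (n+1)| := by
  intro n
  induction n with
  | zero => simp [pseq]
  | succ k ih =>
    obtain ⟨h1, h2⟩ := ih
    constructor
    · push_cast; omega
    · show |pseq t (k+1)| + 1 ≤ |t * pseq t (k+1) - pseq t k|
      have h3 : |t| * |pseq t (k+1)| - |pseq t k| ≤ |t * pseq t (k+1) - pseq t k| := by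
        have := abs_sub_abs_le_abs_sub (t * pseq t (k+1)) (pseq t k)
        rw [abs_mul] at this
        omega
      nlinarith [abs_nonneg (pseq t (k+1)), abs_nonneg (pseq t k)]

private lemma pow_formula (a b c d : ℤ) (hdet : a * d - b * c = 1) :
    ∀ n : ℕ, (!![a, b; c, d] : Matrix (Fin 2) (Fin 2) ℤ) ^ (n+1) =
      pseq (a+d) (n+1) • !![a, b; c, d] - pseq (a+d) n • (1 : Matrix (Fin 2) (Fin 2) ℤ) := by
  intro n
  induction n with
  | zero =>
    simp [pseq]
  | succ k ih =>
    have hsq : (!![a, b; c, d] : Matrix (Fin 2) (Fin 2) ℤ) * !![a, b; c, d] =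
        (a+d) • !![a, b; c, d] - (1 : Matrix (Fin 2) (Fin 2) ℤ) := by
      ext i j
      fin_cases i <;> fin_cases j <;>
        simp [Matrix.mul_apply, Fin.sum_univ_two, Matrix.one_apply] <;> nlinarith
    have : (!![a, b; c, d] : Matrix (Fin 2) (Fin 2) ℤ) ^ (k+2) =
        (!![a, b; c, d] : Matrix (Fin 2) (Fin 2) ℤ) ^ (k+1) * !![a, b; c, d] := by
      rw [pow_succ]
    rw [this, ih, sub_mul, smul_mul_assoc, smul_mul_assoc, hsq, one_mul]
    show _ = pseq (a+d) (k+2) • _ - _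
    rw [show pseq (a+d) (k+2) = (a+d) * pseq (a+d) (k+1) - pseq (a+d) k from rfl]
    rw [smul_sub, sub_smul, mul_smul]
    module

private lemma no_finite_order (a b c d : ℤ) (hdet : a * d - b * c = 1)
    (htr : 2 ≤ |a + d|) (hc : c ≠ 0) :
    ¬ ∃ N : ℕ, 0 < N ∧ (!![a, b; c, d] : Matrix (Fin 2) (Fin 2) ℤ) ^ N = 1 := by
  rintro ⟨N, hN, hpow⟩
  obtain ⟨M, rfl⟩ : ∃ M, N = M + 1 := ⟨N - 1, by omega⟩
  rw [pow_formula a b c d hdet M] at hpow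
  have h10 := congrFun (congrFun hpow 1) 0
  simp only [Matrix.sub_apply, Matrix.smul_apply, smul_eq_mul,
    Matrix.one_apply_ne (show (1 : Fin 2) ≠ 0 by decide)] at h10
  simp at h10
  have hp : pseq (a+d) (M+1) = 0 := by
    rcases h10 with h | h
    · exact h
    · exact absurd h hc
  have := (pseq_ge (a+d) htr M).2
  have := (pseq_ge (a+d) htr M).1
  rw [hp] at *
  simp at *
  omega

/-- For all integers `m₀, m₁ ≥ 2`, the product
`[[m₀,-1],[1,0]] · [[m₁,-1],[1,0]] · [[m₀,-1],[1,0]] · [[1,-1],[1,0]]` equals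
`[[m₀²m₁ - m₀m₁ - 2m₀ + 1, m₀(2 - m₀m₁)], [m₀m₁ - m₁ - 1, 1 - m₀m₁]]`, and this
matrix does not have finite multiplicative order. -/
theorem step4a1_matrix (m₀ m₁ : ℤ) (h₀ : 2 ≤ m₀) (h₁ : 2 ≤ m₁) :
    (!![m₀, -1; 1, 0] : Matrix (Fin 2) (Fin 2) ℤ) * !![m₁, -1; 1, 0] * !![m₀, -1; 1, 0] *
        !![1, -1; 1, 0] =
      !![m₀ ^ 2 * m₁ - m₀ * m₁ - 2 * m₀ + 1, m₀ * (2 - m₀ * m₁);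
         m₀ * m₁ - m₁ - 1, 1 - m₀ * m₁] ∧
    ¬ ∃ N : ℕ, 0 < N ∧
        (!![m₀ ^ 2 * m₁ - m₀ * m₁ - 2 * m₀ + 1, m₀ * (2 - m₀ * m₁);
           m₀ * m₁ - m₁ - 1, 1 - m₀ * m₁] : Matrix (Fin 2) (Fin 2) ℤ) ^ N = 1 := by
  constructor
  · ext i j
    fin_cases i <;> fin_cases j <;>
      simp [Matrix.mul_apply, Fin.sum_univ_two] <;> ring
  · apply no_finite_order
    · ring
    · rcases le_or_gt 3 m₀ with h | h
      · have key : 0 ≤ m₀ * (m₁ * (m₀ - 2) - 2) := by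
          have h1 : 2 * (m₀ - 2) ≤ m₁ * (m₀ - 2) := by nlinarith
          nlinarith
        rw [abs_of_nonneg (by nlinarith)]
        nlinarith
      · have h2 : m₀ = 2 := by omega
        subst h2
        have : (2:ℤ) ^ 2 * m₁ - 2 * m₁ - 2 * 2 + 1 + (1 - 2 * m₁) = -2 := by ring
        rw [this]
        norm_num
    · nlinarith
end
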